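/- Every LP propositional formula built from variables, ¬, ∧, ∨ (without constants) that is a classical tautology is valid in LP: whenever a formula evaluates to 1 under every classical {0,1}-assignment under the standard two-valued semantics, it evaluates to a designated value (⊤ or +) under every three-valued LP assignment. -/
import Mathlib

inductive TV where
  | top | par | bot
deriving DecidableEq

open TV

def tvNeg : TV → TV
  | top => bot
  | par => par
  | bot => top

def tvAnd : TV → TV → TV
  | top, b   => b
  | par, top => par
  | par, par => par
  | par, bot => bot
  | bot, _   => bot

def tvOr (a b : TV) : TV := tvNeg (tvAnd (tvNeg a) (tvNeg b))

def des (a : TV) : Prop := a = top ∨ a = par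

/-- Propositional formulas over variables indexed by ℕ, built from ¬, ∧, ∨,
without constants. -/
inductive Fm where
  | var : ℕ → Fm
  | neg : Fm → Fm
  | and : Fm → Fm → Fm
  | or : Fm → Fm → Fm

/-- Three-valued LP evaluation. -/
def evalLP : Fm → (ℕ → TV) → TV
  | .var i, v => v i
  | .neg φ, v => tvNeg (evalLP φ v)
  | .and φ ψ, v => tvAnd (evalLP φ v) (evalLP ψ v)
  | .or φ ψ, v => tvOr (evalLP φ v) (evalLP ψ v)

/-- Classical two-valued evaluation. -/
def evalCl : Fm → (ℕ → Bool) → Bool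
  | .var i, w => w i
  | .neg φ, w => !(evalCl φ w)
  | .and φ ψ, w => evalCl φ w && evalCl ψ w
  | .or φ ψ, w => evalCl φ w || evalCl ψ w

/-- Rounding relation: b=true corresponds to values in {top,par},
b=false to values in {bot,par}. -/
def approx (b : Bool) (a : TV) : Prop :=
  if b then a = top ∨ a = par else a = bot ∨ a = par

lemma approx_neg {b a} (h : approx b a) : approx (!b) (tvNeg a) := by
  cases b <;> rcases h with h | h <;> subst h <;> simp [approx, tvNeg]

lemma approx_and {b₁ b₂ a₁ a₂} (h₁ : approx b₁ a₁) (h₂ : approx b₂ a₂) :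
    approx (b₁ && b₂) (tvAnd a₁ a₂) := by
  cases b₁ <;> cases b₂ <;>
    rcases h₁ with h₁ | h₁ <;> rcases h₂ with h₂ | h₂ <;>
    subst h₁ <;> subst h₂ <;> simp [approx, tvAnd]

lemma approx_or {b₁ b₂ a₁ a₂} (h₁ : approx b₁ a₁) (h₂ : approx b₂ a₂) :
    approx (b₁ || b₂) (tvOr a₁ a₂) := by
  cases b₁ <;> cases b₂ <;>
    rcases h₁ with h₁ | h₁ <;> rcases h₂ with h₂ | h₂ <;>
    subst h₁ <;> subst h₂ <;> simp [approx, tvOr, tvAnd, tvNeg]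

lemma approx_eval (φ : Fm) (v : ℕ → TV) :
    approx (evalCl φ (fun i => v i ≠ bot)) (evalLP φ v) := by
  induction φ with
  | var i =>
      simp only [evalCl, evalLP]
      rcases h : v i with _ | _ | _ <;> simp [approx, h]
  | neg φ ih => exact approx_neg ih
  | and φ ψ ih₁ ih₂ => exact approx_and ih₁ ih₂
  | or φ ψ ih₁ ih₂ => exact approx_or ih₁ ih₂

/-- every classical tautology (in ¬, ∧, ∨) is valid in LP:
it takes a designated value under every three-valued assignment. -/
theorem classical_tautologies_are_LP_valid :
    ∀ φ : Fm, (∀ w : ℕ → Bool, evalCl φ w = true) →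
      ∀ v : ℕ → TV, des (evalLP φ v) := by
  intro φ h v
  have := approx_eval φ v
  rw [h] at this
  exact this
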